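/- (Separation principle with constant metrics.) Let f : ℝⁿ → ℝⁿ be continuously differentiable with Jacobian A(x), B an n×m real matrix, C a p×n real matrix. Suppose there exist symmetric positive definite matrices W_c, W_o, constants λ_c > 0, λ_o > 0, ρ_c ≥ 0, ρ_o ≥ 0 such that for all x ∈ ℝⁿ: W_c·A(x)ᵀ + A(x)·W_c - ρ_c·B·Bᵀ ⪯ -2λ_c·W_c and A(x)ᵀ·W_o + W_o·A(x) - ρ_o·Cᵀ·C ⪯ -2λ_o·W_o. Define K = -(ρ_c/2)·Bᵀ·W_c⁻¹ and L = (ρ_o/2)·W_o⁻¹·Cᵀ. Let u⋆ : [0,∞) → ℝᵐ be continuous and x⋆ a solution of ẋ⋆ = f(x⋆) + B·u⋆(t). Consider the output-feedback closed loop: ẋ = f(x) + B·(u⋆(t) + K·(x̂ - x⋆(t))), ẋ̂ = f(x̂) + B·(u⋆(t) + K·(x̂ - x⋆(t))) + L·(C·x - C·x̂). Then there exists a constant c > 0, depending only on A, B, C, W_c, W_o, ρ_c, ρ_o, λ_c, λ_o, such that for every solution (x, x̂) on [0,∞) and all t ≥ 0: ‖x(t) - x⋆(t)‖ + ‖x̂(t)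 - x(t)‖ ≤ c·(1 + t)·e^{-min(λ_c, λ_o)·t}·(‖x(0) - x⋆(0)‖ + ‖x̂(0) - x(0)‖). In particular the certainty-equivalence combination of the contraction-metric controller and observer exponentially stabilizes every feasible target trajectory by output feedback. -/

import Mathlib

/-!
The error coordinates `e = x - x⋆` and `ẽ = x̂ - x` form a cascade. The observer error obeys
`ẽ' = F_o(x̂) - F_o(x)` with `F_o z = f z - L C z`, whose Jacobian `A - L C` is contracting in the
metric `W_o` at rate `λ_o` by the observer LMI, so `ẽᵀ W_o ẽ` decays like `e^{-2 λ_o t}`. The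
tracking error obeys `e' = F_c(x) - F_c(x⋆) + B K ẽ` with `F_c z = f z + B K z`, whose Jacobian
`A + B K` is contracting in the metric `W_c⁻¹` at rate `λ_c` by the controller LMI. (The mean
value theorem turns these Jacobian bounds into bounds on increments `F(b) - F(a)`.) Hence
`V = eᵀ W_c⁻¹ e` satisfies `V' ≤ -2 λ_c V + 2 a e^{-μ t} √V` with `μ = min λ_c λ_o`, and
comparing `V e^{2 μ t} / (1 + t)` with a linear function gives `√V ≤ (1 + t) e^{-μ t} (√V(0) + a)`.
The factor `1 + t` is the resonance between the two equal-rate decays.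
-/

open Matrix Set Real

section ScalarComparison

theorem le_of_hasDerivAt_nonpos {g g' : ℝ → ℝ} (hg : ∀ t, 0 ≤ t → HasDerivAt g (g' t) t)
    (hg' : ∀ t, 0 ≤ t → g' t ≤ 0) {t : ℝ} (ht : 0 ≤ t) : g t ≤ g 0 := by
  have hanti : AntitoneOn g (Ici 0) := by
    refine antitoneOn_of_hasDerivWithinAt_nonpos (f' := g') (convex_Ici 0)
      (fun s hs => (hg s hs).continuousAt.continuousWithinAt) (fun s hs => ?_) fun s hs => ?_
    all_goals rw [interior_Ici] at hs
    · exact (hg s hs.le).hasDerivWithinAt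
    · exact hg' s hs.le
  exact hanti self_mem_Ici ht ht

theorem exp_mul_mul_exp_neg_mul (c t : ℝ) : exp (c * t) * exp (-c * t) = 1 := by
  rw [← exp_add, neg_mul, add_neg_cancel, exp_zero]

theorem sqrt_le_sqrt_mul_exp_of_hasDerivAt_le {V V' : ℝ → ℝ} {lam : ℝ}
    (hV : ∀ t, 0 ≤ t → HasDerivAt V (V' t) t) (hV' : ∀ t, 0 ≤ t → V' t ≤ -(2 * lam) * V t)
    {t : ℝ} (ht : 0 ≤ t) : √(V t) ≤ √(V 0) * exp (-lam * t) := by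
  have hg : ∀ s, 0 ≤ s → HasDerivAt (fun s => V s * exp (lam * s) ^ 2)
      ((V' s + 2 * lam * V s) * exp (lam * s) ^ 2) s := fun s hs =>
    ((hV s hs).fun_mul ((hasDerivAt_const_mul lam).exp.fun_pow 2)).congr_deriv (by ring)
  have hmono : V t * exp (lam * t) ^ 2 ≤ V 0 := by
    simpa using le_of_hasDerivAt_nonpos hg
      (fun s hs => mul_nonpos_of_nonpos_of_nonneg (by linarith [hV' s hs]) (sq_nonneg _)) ht
  have hV_le : V t ≤ V 0 * exp (-lam * t) ^ 2 :=
    calc V t = V t * exp (lam * t) ^ 2 * exp (-lam * t) ^ 2 := by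
          rw [mul_assoc, ← mul_pow, exp_mul_mul_exp_neg_mul, one_pow, mul_one]
      _ ≤ V 0 * exp (-lam * t) ^ 2 := mul_le_mul_of_nonneg_right hmono (sq_nonneg _)
  calc √(V t) ≤ √(V 0 * exp (-lam * t) ^ 2) := sqrt_le_sqrt hV_le
    _ = √(V 0) * exp (-lam * t) := by rw [sqrt_mul' _ (sq_nonneg _), sqrt_sq (exp_pos _).le]

theorem sqrt_le_mul_exp_of_hasDerivAt_le_add_sqrt {V V' : ℝ → ℝ} {lam μ a : ℝ}
    (hV₀ : ∀ t, 0 ≤ V t) (hμ : μ ≤ lam) (ha : 0 ≤ a)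
    (hV : ∀ t, 0 ≤ t → HasDerivAt V (V' t) t)
    (hV' : ∀ t, 0 ≤ t → V' t ≤ -(2 * lam) * V t + 2 * a * exp (-μ * t) * √(V t))
    {t : ℝ} (ht : 0 ≤ t) : √(V t) ≤ (1 + t) * exp (-μ * t) * (√(V 0) + a) := by
  have hg : ∀ s, 0 ≤ s → HasDerivAt (fun s => V s * exp (μ * s) ^ 2 / (1 + s) - a ^ 2 * s)
      (((V' s + 2 * μ * V s) * exp (μ * s) ^ 2 * (1 + s) - V s * exp (μ * s) ^ 2) / (1 + s) ^ 2
        - a ^ 2) s := fun s hs =>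
    ((((hV s hs).fun_mul ((hasDerivAt_const_mul μ).exp.fun_pow 2)).fun_div
      ((hasDerivAt_id' s).const_add 1) (by positivity)).fun_sub
      ((hasDerivAt_id' s).const_mul (a ^ 2))).congr_deriv (by ring)
  -- with `q = √(V s)` and `r = exp (μ s)` the derivative is at most `-(q r / (1 + s) - a) ^ 2`
  have hg' : ∀ s, 0 ≤ s → ((V' s + 2 * μ * V s) * exp (μ * s) ^ 2 * (1 + s) -
      V s * exp (μ * s) ^ 2) / (1 + s) ^ 2 - a ^ 2 ≤ 0 := fun s hs => by
    set q := √(V s)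
    set r := exp (μ * s)
    have hq : V s = q ^ 2 := (sq_sqrt (hV₀ s)).symm
    have hdecay : (V' s + 2 * μ * V s) * r ^ 2 ≤ 2 * a * q * r :=
      calc (V' s + 2 * μ * V s) * r ^ 2 ≤ 2 * a * exp (-μ * s) * q * r ^ 2 := by
            gcongr; nlinarith [hV' s hs, hV₀ s]
        _ = 2 * a * q * r * (r * exp (-μ * s)) := by ring
        _ = 2 * a * q * r := by rw [exp_mul_mul_exp_neg_mul, mul_one]
    rw [sub_nonpos, div_le_iff₀ (by positivity)]
    rw [hq] at hdecay ⊢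
    nlinarith [sq_nonneg (q * r - a * (1 + s)),
      mul_le_mul_of_nonneg_right hdecay (by linarith : (0:ℝ) ≤ 1 + s)]
  have hmono : V t * exp (μ * t) ^ 2 ≤ (1 + t) * (V 0 + a ^ 2 * t) := by
    have := le_of_hasDerivAt_nonpos hg hg' ht
    simp only [mul_zero, exp_zero, one_pow, mul_one, add_zero, div_one, sub_zero] at this
    rw [sub_le_iff_le_add, div_le_iff₀ (by positivity)] at this
    linarith
  have hbound : (1 + t) * (V 0 + a ^ 2 * t) ≤ ((1 + t) * (√(V 0) + a)) ^ 2 := by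
    have hgap : ((1 + t) * (√(V 0) + a)) ^ 2 - (1 + t) * (V 0 + a ^ 2 * t) =
        (1 + t) * (2 * a * √(V 0) + a ^ 2 + t * (V 0 + 2 * a * √(V 0))) := by
      linear_combination (1 + t) ^ 2 * sq_sqrt (hV₀ 0)
    have := hV₀ 0
    linarith [show 0 ≤ (1 + t) * (2 * a * √(V 0) + a ^ 2 + t * (V 0 + 2 * a * √(V 0))) by
      positivity]
  calc √(V t) = √(V t * exp (μ * t) ^ 2) * exp (-μ * t) := by
        rw [sqrt_mul (hV₀ t), sqrt_sq (exp_pos _).le, mul_assoc, exp_mul_mul_exp_neg_mul, mul_one]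
    _ ≤ √(((1 + t) * (√(V 0) + a)) ^ 2) * exp (-μ * t) := by
        gcongr; exact hmono.trans hbound
    _ = (1 + t) * exp (-μ * t) * (√(V 0) + a) := by
        rw [sqrt_sq (by positivity)]; ring

end ScalarComparison

section QuadraticForms

variable {ι κ : Type*}

theorem Matrix.PosSemidef.isSymm [Fintype ι] {P : Matrix ι ι ℝ} (hP : P.PosSemidef) : P.IsSymm :=
  isHermitian_iff_isSymm.1 hP.isHermitian

variable [Fintype ι] [Fintype κ]

theorem Matrix.IsSymm.dotProduct_mulVec_comm {P : Matrix ι ι ℝ} (hP : P.IsSymm) (u v : ι → ℝ) :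
    u ⬝ᵥ (P *ᵥ v) = v ⬝ᵥ (P *ᵥ u) := by
  rw [dotProduct_mulVec, ← mulVec_transpose, hP.eq, dotProduct_comm]

theorem dotProduct_self_nonneg (v : ι → ℝ) : 0 ≤ v ⬝ᵥ v := by
  simpa using dotProduct_self_star_nonneg v

theorem sqrt_dotProduct_self_eq_norm (v : ι → ℝ) : √(v ⬝ᵥ v) = ‖WithLp.toLp 2 v‖ := by
  rw [norm_eq_sqrt_real_inner, EuclideanSpace.inner_toLp_toLp, star_trivial]

open scoped Matrix.Norms.L2Operator in
theorem exists_dotProduct_mulVec_le (M : Matrix ι κ ℝ) :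
    ∃ c, 0 ≤ c ∧ ∀ u v, u ⬝ᵥ (M *ᵥ v) ≤ c * (√(u ⬝ᵥ u) * √(v ⬝ᵥ v)) := by
  classical
  refine ⟨‖M‖, norm_nonneg M, fun u v => ?_⟩
  calc u ⬝ᵥ (M *ᵥ v) = inner ℝ (WithLp.toLp 2 u) (WithLp.toLp 2 (M *ᵥ v)) := by
        rw [EuclideanSpace.inner_toLp_toLp, star_trivial, dotProduct_comm]
    _ ≤ ‖WithLp.toLp 2 u‖ * ‖WithLp.toLp 2 (M *ᵥ v)‖ := real_inner_le_norm _ _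
    _ ≤ ‖WithLp.toLp 2 u‖ * (‖M‖ * ‖WithLp.toLp 2 v‖) := by
        gcongr; exact M.l2_opNorm_mulVec (WithLp.toLp 2 v)
    _ = ‖M‖ * (√(u ⬝ᵥ u) * √(v ⬝ᵥ v)) := by
        rw [sqrt_dotProduct_self_eq_norm, sqrt_dotProduct_self_eq_norm]; ring

theorem Matrix.PosSemidef.dotProduct_mulVec_sq_le {P : Matrix ι ι ℝ} (hP : P.PosSemidef)
    (u v : ι → ℝ) : (u ⬝ᵥ (P *ᵥ v)) ^ 2 ≤ (u ⬝ᵥ (P *ᵥ u)) * (v ⬝ᵥ (P *ᵥ v)) := by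
  have hquad : ∀ x : ℝ,
      0 ≤ (v ⬝ᵥ (P *ᵥ v)) * (x * x) + 2 * (u ⬝ᵥ (P *ᵥ v)) * x + u ⬝ᵥ (P *ᵥ u) := fun x => by
    have h := hP.dotProduct_mulVec_nonneg (u + x • v)
    simp only [star_trivial, mulVec_add, mulVec_smul, add_dotProduct, dotProduct_add,
      smul_dotProduct, dotProduct_smul, smul_eq_mul, hP.isSymm.dotProduct_mulVec_comm v u] at h
    linarith
  have := discrim_le_zero hquad
  rw [discrim] at this
  linarith

theorem Matrix.PosDef.exists_sqrt_dotProduct_le [DecidableEq ι] {P : Matrix ι ι ℝ}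
    (hP : P.PosDef) : ∃ c, 0 < c ∧ ∀ v : ι → ℝ,
      √(v ⬝ᵥ v) ≤ c * √(v ⬝ᵥ (P *ᵥ v)) ∧ √(v ⬝ᵥ (P *ᵥ v)) ≤ c * √(v ⬝ᵥ v) := by
  obtain ⟨a, ha, hPa⟩ := exists_dotProduct_mulVec_le P
  obtain ⟨b, hb, hPb⟩ := exists_dotProduct_mulVec_le P⁻¹
  refine ⟨√(a + b + 1), by positivity, fun v => ?_⟩
  have hvv := dotProduct_self_nonneg v
  have hvPv : 0 ≤ v ⬝ᵥ (P *ᵥ v) := by simpa using hP.posSemidef.dotProduct_mulVec_nonneg v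
  have hnorm : √(v ⬝ᵥ v) * √(v ⬝ᵥ v) = v ⬝ᵥ v := mul_self_sqrt hvv
  -- Cauchy–Schwarz for the form of `P`, applied to `v` and `P⁻¹ v`
  have hlower : v ⬝ᵥ v ≤ b * (v ⬝ᵥ (P *ᵥ v)) := by
    have hcs := hP.posSemidef.dotProduct_mulVec_sq_le v (P⁻¹ *ᵥ v)
    rw [mulVec_mulVec, mul_nonsing_inv _ ((isUnit_iff_isUnit_det _).1 hP.isUnit), one_mulVec,
      dotProduct_comm (P⁻¹ *ᵥ v)] at hcs
    have hinv := hPb v v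
    rw [hnorm] at hinv
    rcases hvv.eq_or_lt with h0 | hpos
    · rw [← h0]; positivity
    · nlinarith [mul_le_mul_of_nonneg_left hinv hvPv]
  have hupper : v ⬝ᵥ (P *ᵥ v) ≤ a * (v ⬝ᵥ v) := by simpa [hnorm] using hPa v v
  constructor
  · calc √(v ⬝ᵥ v) ≤ √((a + b + 1) * (v ⬝ᵥ (P *ᵥ v))) := sqrt_le_sqrt (by nlinarith)
      _ = √(a + b + 1) * √(v ⬝ᵥ (P *ᵥ v)) := sqrt_mul (by positivity) _
  · calc √(v ⬝ᵥ (P *ᵥ v)) ≤ √((a + b + 1) * (v ⬝ᵥ v)) := sqrt_le_sqrt (by nlinarith)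
      _ = √(a + b + 1) * √(v ⬝ᵥ v) := sqrt_mul (by positivity) _

end QuadraticForms

section Contraction

variable {ι κ : Type*} [Fintype ι] [Fintype κ]

theorem HasDerivAt.dotProduct {u v : ℝ → ι → ℝ} {u' v' : ι → ℝ} {t : ℝ}
    (hu : HasDerivAt u u' t) (hv : HasDerivAt v v' t) :
    HasDerivAt (fun s => u s ⬝ᵥ v s) (u' ⬝ᵥ v t + u t ⬝ᵥ v') t := by
  have h : HasDerivAt (fun s => u s ⬝ᵥ v s) (∑ i, (u' i * v t i + u t i * v' i)) t :=
    HasDerivAt.fun_sum fun i _ => (hasDerivAt_pi.1 hu i).fun_mul (hasDerivAt_pi.1 hv i)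
  rwa [Finset.sum_add_distrib] at h

theorem HasDerivAt.mulVec (M : Matrix κ ι ℝ) {u : ℝ → ι → ℝ} {u' : ι → ℝ} {t : ℝ}
    (hu : HasDerivAt u u' t) : HasDerivAt (fun s => M *ᵥ u s) (M *ᵥ u') t :=
  M.mulVecLin.toContinuousLinearMap.hasFDerivAt.comp_hasDerivAt t hu

theorem HasDerivAt.dotProduct_mulVec_self {P : Matrix ι ι ℝ} (hP : P.IsSymm) {e : ℝ → ι → ℝ}
    {e' : ι → ℝ} {t : ℝ} (he : HasDerivAt e e' t) :
    HasDerivAt (fun s => e s ⬝ᵥ (P *ᵥ e s)) (2 * (e t ⬝ᵥ (P *ᵥ e'))) t :=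
  (he.dotProduct (he.mulVec P)).congr_deriv (by rw [hP.dotProduct_mulVec_comm e']; ring)

theorem exists_dotProduct_sub_eq {F : (ι → ℝ) → κ → ℝ} {F' : (ι → ℝ) → (ι → ℝ) →L[ℝ] κ → ℝ}
    (hF : ∀ x, HasFDerivAt F (F' x) x) (w : κ → ℝ) (a b : ι → ℝ) :
    ∃ ξ, w ⬝ᵥ (F b - F a) = w ⬝ᵥ F' ξ (b - a) := by
  have hg : ∀ s : ℝ, HasDerivAt (fun s : ℝ => w ⬝ᵥ F (a + s • (b - a)))
      (w ⬝ᵥ F' (a + s • (b - a)) (b - a)) s := fun s => by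
    have hline : HasDerivAt (fun s : ℝ => a + s • (b - a)) (b - a) s := by
      simpa using ((hasDerivAt_id s).smul_const (b - a)).const_add a
    simpa using (hasDerivAt_const s w).dotProduct ((hF _).comp_hasDerivAt s hline)
  obtain ⟨s, -, hs⟩ := exists_hasDerivAt_eq_slope _ _ zero_lt_one
    (fun s _ => (hg s).continuousAt.continuousWithinAt) fun s _ => hg s
  exact ⟨a + s • (b - a), by simpa [dotProduct_sub] using hs.symm⟩

theorem dotProduct_mulVec_sub_le {F : (ι → ℝ) → ι → ℝ} {F' : (ι → ℝ) → (ι → ℝ) →L[ℝ] ι → ℝ}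
    {P : Matrix ι ι ℝ} {lam : ℝ} (hF : ∀ x, HasFDerivAt F (F' x) x)
    (hF' : ∀ x v, v ⬝ᵥ (P *ᵥ F' x v) ≤ -lam * (v ⬝ᵥ (P *ᵥ v))) (a b : ι → ℝ) :
    (b - a) ⬝ᵥ (P *ᵥ (F b - F a)) ≤ -lam * ((b - a) ⬝ᵥ (P *ᵥ (b - a))) := by
  obtain ⟨ξ, hξ⟩ := exists_dotProduct_sub_eq hF ((b - a) ᵥ* P) a b
  rw [dotProduct_mulVec, hξ, ← dotProduct_mulVec]
  exact hF' ξ (b - a)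

theorem dotProduct_mulVec_le_of_lmi {W M : Matrix ι ι ℝ} {N : Matrix κ ι ℝ} {lam ρ : ℝ}
    (hW : W.IsSymm) (hLMI : ((-(2 * lam)) • W - (Mᵀ * W + W * M - ρ • (Nᵀ * N))).PosSemidef)
    (v : ι → ℝ) :
    v ⬝ᵥ (W *ᵥ (M *ᵥ v)) ≤ -lam * (v ⬝ᵥ (W *ᵥ v)) + ρ / 2 * ((N *ᵥ v) ⬝ᵥ (N *ᵥ v)) := by
  have h := hLMI.dotProduct_mulVec_nonneg v
  have hMW : v ⬝ᵥ (Mᵀ *ᵥ (W *ᵥ v)) = v ⬝ᵥ (W *ᵥ (M *ᵥ v)) := by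
    rw [dotProduct_mulVec, vecMul_transpose, hW.dotProduct_mulVec_comm]
  have hN : v ⬝ᵥ (Nᵀ *ᵥ (N *ᵥ v)) = (N *ᵥ v) ⬝ᵥ (N *ᵥ v) := by
    rw [dotProduct_mulVec, vecMul_transpose]
  simp only [star_trivial, sub_mulVec, add_mulVec, smul_mulVec, ← mulVec_mulVec,
    dotProduct_sub, dotProduct_add, dotProduct_smul, smul_eq_mul, hMW, hN] at h
  linarith

variable [DecidableEq ι]

theorem observer_dotProduct_mulVec_le {Wo A : Matrix ι ι ℝ} {C : Matrix κ ι ℝ}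
    {L : Matrix ι κ ℝ} {lam ρ : ℝ} (hWo : Wo.PosDef)
    (hLMI : ((-(2 * lam)) • Wo - (Aᵀ * Wo + Wo * A - ρ • (Cᵀ * C))).PosSemidef)
    (hL : L = (ρ / 2) • (Wo⁻¹ * Cᵀ)) (v : ι → ℝ) :
    v ⬝ᵥ (Wo *ᵥ (A *ᵥ v - (L * C) *ᵥ v)) ≤ -lam * (v ⬝ᵥ (Wo *ᵥ v)) := by
  have hWoL : Wo * L = (ρ / 2) • Cᵀ := by
    rw [hL, Matrix.mul_smul, ← Matrix.mul_assoc,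
      mul_nonsing_inv _ ((isUnit_iff_isUnit_det _).1 hWo.isUnit), Matrix.one_mul]
  have hC : v ⬝ᵥ (Wo *ᵥ ((L * C) *ᵥ v)) = ρ / 2 * ((C *ᵥ v) ⬝ᵥ (C *ᵥ v)) := by
    rw [← mulVec_mulVec, mulVec_mulVec, hWoL, smul_mulVec, dotProduct_smul, smul_eq_mul,
      dotProduct_mulVec, vecMul_transpose]
  rw [mulVec_sub, dotProduct_sub, hC]
  linarith [dotProduct_mulVec_le_of_lmi hWo.posSemidef.isSymm hLMI v]

theorem controller_dotProduct_mulVec_le {Wc A : Matrix ι ι ℝ} {B : Matrix ι κ ℝ}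
    {K : Matrix κ ι ℝ} {lam ρ : ℝ} (hWc : Wc.PosDef)
    (hLMI : ((-(2 * lam)) • Wc - (Wc * Aᵀ + A * Wc - ρ • (B * Bᵀ))).PosSemidef)
    (hK : K = (-(ρ / 2)) • (Bᵀ * Wc⁻¹)) (v : ι → ℝ) :
    v ⬝ᵥ (Wc⁻¹ *ᵥ (A *ᵥ v + (B * K) *ᵥ v)) ≤ -lam * (v ⬝ᵥ (Wc⁻¹ *ᵥ v)) := by
  -- the controller LMI is the observer LMI of the dual pair `(Aᵀ, Bᵀ)`, read at `w = Wc⁻¹ v`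
  have hLMI' : ((-(2 * lam)) • Wc - ((Aᵀ)ᵀ * Wc + Wc * Aᵀ - ρ • ((Bᵀ)ᵀ * Bᵀ))).PosSemidef := by
    rwa [transpose_transpose, transpose_transpose, add_comm]
  have hdet := (isUnit_iff_isUnit_det _).1 hWc.isUnit
  obtain ⟨w, rfl⟩ : ∃ w, Wc *ᵥ w = v :=
    ⟨Wc⁻¹ *ᵥ v, by rw [mulVec_mulVec, mul_nonsing_inv _ hdet, one_mulVec]⟩
  have hw : Wc⁻¹ *ᵥ (Wc *ᵥ w) = w := by
    rw [mulVec_mulVec, nonsing_inv_mul _ hdet, one_mulVec]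
  have hsymm : ∀ u, (Wc *ᵥ w) ⬝ᵥ (Wc⁻¹ *ᵥ u) = u ⬝ᵥ w := fun u => by
    rw [hWc.inv.posSemidef.isSymm.dotProduct_mulVec_comm, hw]
  have hA : (Wc *ᵥ w) ⬝ᵥ (Wc⁻¹ *ᵥ (A *ᵥ (Wc *ᵥ w))) = w ⬝ᵥ (Wc *ᵥ (Aᵀ *ᵥ w)) := by
    rw [hsymm, dotProduct_comm, dotProduct_mulVec, ← mulVec_transpose,
      hWc.posSemidef.isSymm.dotProduct_mulVec_comm]
  have hBK : (Wc *ᵥ w) ⬝ᵥ (Wc⁻¹ *ᵥ ((B * K) *ᵥ (Wc *ᵥ w))) =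
      -(ρ / 2) * ((Bᵀ *ᵥ w) ⬝ᵥ (Bᵀ *ᵥ w)) := by
    rw [hsymm, hK, Matrix.mul_smul, smul_mulVec, ← mulVec_mulVec, ← mulVec_mulVec, hw,
      smul_dotProduct, smul_eq_mul, dotProduct_comm, dotProduct_mulVec, ← mulVec_transpose]
  have hV : (Wc *ᵥ w) ⬝ᵥ (Wc⁻¹ *ᵥ (Wc *ᵥ w)) = w ⬝ᵥ (Wc *ᵥ w) := by
    rw [hsymm, dotProduct_comm]
  rw [mulVec_add, dotProduct_add, hA, hBK, hV]
  linarith [dotProduct_mulVec_le_of_lmi hWc.posSemidef.isSymm hLMI' w]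

end Contraction

section ErrorDynamics

variable {ι κ : Type*} [Fintype ι] [Fintype κ] [DecidableEq ι] {f : (ι → ℝ) → ι → ℝ}
  {A : (ι → ℝ) → Matrix ι ι ℝ}

theorem observer_error_le (hf : ∀ x, HasFDerivAt f (toLin' (A x)).toContinuousLinearMap x)
    {Wo : Matrix ι ι ℝ} {C : Matrix κ ι ℝ} {L : Matrix ι κ ℝ} {lam ρ : ℝ} (hWo : Wo.PosDef)
    (hLMI : ∀ x, ((-(2 * lam)) • Wo - ((A x)ᵀ * Wo + Wo * A x - ρ • (Cᵀ * C))).PosSemidef)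
    (hL : L = (ρ / 2) • (Wo⁻¹ * Cᵀ)) :
    ∃ c, 0 < c ∧ ∀ g x xhat : ℝ → ι → ℝ,
      (∀ t, 0 ≤ t → HasDerivAt x (f (x t) + g t) t) →
      (∀ t, 0 ≤ t → HasDerivAt xhat (f (xhat t) + g t + L *ᵥ (C *ᵥ x t - C *ᵥ xhat t)) t) →
      ∀ t, 0 ≤ t → √((xhat t - x t) ⬝ᵥ (xhat t - x t)) ≤
        c * √((xhat 0 - x 0) ⬝ᵥ (xhat 0 - x 0)) * exp (-lam * t) := by
  obtain ⟨c, hc, hWo_equiv⟩ := hWo.exists_sqrt_dotProduct_le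
  set F : (ι → ℝ) → ι → ℝ := fun z => f z - (L * C) *ᵥ z
  have hcontr : ∀ a b, (b - a) ⬝ᵥ (Wo *ᵥ (F b - F a)) ≤ -lam * ((b - a) ⬝ᵥ (Wo *ᵥ (b - a))) :=
    dotProduct_mulVec_sub_le (fun z => (hf z).sub (L * C).mulVecLin.toContinuousLinearMap.hasFDerivAt)
      fun z v => by simpa using observer_dotProduct_mulVec_le hWo (hLMI z) hL v
  refine ⟨c ^ 2, by positivity, fun g x xhat hx hxhat t ht => ?_⟩
  have he : ∀ s, 0 ≤ s → HasDerivAt (fun s => xhat s - x s) (F (xhat s) - F (x s)) s :=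
    fun s hs => ((hxhat s hs).sub (hx s hs)).congr_deriv (by
      simp only [F, ← mulVec_mulVec, mulVec_sub]; abel)
  have hV := sqrt_le_sqrt_mul_exp_of_hasDerivAt_le (lam := lam)
    (fun s hs => (he s hs).dotProduct_mulVec_self hWo.posSemidef.isSymm)
    (fun s _ => by linarith [hcontr (x s) (xhat s)]) ht
  calc √((xhat t - x t) ⬝ᵥ (xhat t - x t))
      ≤ c * √((xhat t - x t) ⬝ᵥ (Wo *ᵥ (xhat t - x t))) := (hWo_equiv _).1
    _ ≤ c * (c * √((xhat 0 - x 0) ⬝ᵥ (xhat 0 - x 0)) * exp (-lam * t)) := by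
        gcongr; exact hV.trans (by gcongr; exact (hWo_equiv _).2)
    _ = c ^ 2 * √((xhat 0 - x 0) ⬝ᵥ (xhat 0 - x 0)) * exp (-lam * t) := by ring

theorem tracking_error_le (hf : ∀ x, HasFDerivAt f (toLin' (A x)).toContinuousLinearMap x)
    {Wc : Matrix ι ι ℝ} {B : Matrix ι κ ℝ} {K : Matrix κ ι ℝ} {lam ρ : ℝ} (hWc : Wc.PosDef)
    (hLMI : ∀ x, ((-(2 * lam)) • Wc - (Wc * (A x)ᵀ + A x * Wc - ρ • (B * Bᵀ))).PosSemidef)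
    (hK : K = (-(ρ / 2)) • (Bᵀ * Wc⁻¹)) :
    ∃ c, 0 < c ∧ ∀ (u : ℝ → κ → ℝ) (xstar x xhat : ℝ → ι → ℝ) (β μ : ℝ), 0 ≤ β → μ ≤ lam →
      (∀ t, 0 ≤ t → HasDerivAt xstar (f (xstar t) + B *ᵥ u t) t) →
      (∀ t, 0 ≤ t → HasDerivAt x (f (x t) + B *ᵥ (u t + K *ᵥ (xhat t - xstar t))) t) →
      (∀ t, 0 ≤ t → √((xhat t - x t) ⬝ᵥ (xhat t - x t)) ≤ β * exp (-μ * t)) →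
      ∀ t, 0 ≤ t → √((x t - xstar t) ⬝ᵥ (x t - xstar t)) ≤
        c * (1 + t) * exp (-μ * t) * (√((x 0 - xstar 0) ⬝ᵥ (x 0 - xstar 0)) + β) := by
  obtain ⟨c, hc, hWc_equiv⟩ := hWc.inv.exists_sqrt_dotProduct_le
  obtain ⟨ν, hν, hcross⟩ := exists_dotProduct_mulVec_le (Wc⁻¹ * (B * K))
  set F : (ι → ℝ) → ι → ℝ := fun z => f z + (B * K) *ᵥ z
  have hcontr : ∀ a b, (b - a) ⬝ᵥ (Wc⁻¹ *ᵥ (F b - F a)) ≤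
      -lam * ((b - a) ⬝ᵥ (Wc⁻¹ *ᵥ (b - a))) :=
    dotProduct_mulVec_sub_le (fun z => (hf z).add (B * K).mulVecLin.toContinuousLinearMap.hasFDerivAt)
      fun z v => by simpa using controller_dotProduct_mulVec_le hWc (hLMI z) hK v
  refine ⟨c ^ 2 * (1 + ν), by positivity,
    fun u xstar x xhat β μ hβ hμ hxstar hx hxhat t ht => ?_⟩
  set e := fun s => x s - xstar s
  set ε := fun s => xhat s - x s
  set V := fun s => e s ⬝ᵥ (Wc⁻¹ *ᵥ e s)
  have he : ∀ s, 0 ≤ s → HasDerivAt e (F (x s) - F (xstar s) + (B * K) *ᵥ ε s) s :=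
    fun s hs => ((hx s hs).sub (hxstar s hs)).congr_deriv (by
      simp only [F, ε, ← mulVec_mulVec, mulVec_add, mulVec_sub]; abel)
  have hV' : ∀ s, 0 ≤ s → 2 * (e s ⬝ᵥ (Wc⁻¹ *ᵥ (F (x s) - F (xstar s) + (B * K) *ᵥ ε s))) ≤
      -(2 * lam) * V s + 2 * (ν * c * β) * exp (-μ * s) * √(V s) := fun s hs => by
    have hε : e s ⬝ᵥ (Wc⁻¹ *ᵥ ((B * K) *ᵥ ε s)) ≤ ν * c * β * exp (-μ * s) * √(V s) :=
      calc e s ⬝ᵥ (Wc⁻¹ *ᵥ ((B * K) *ᵥ ε s)) ≤ ν * (√(e s ⬝ᵥ e s) * √(ε s ⬝ᵥ ε s)) := by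
            rw [mulVec_mulVec]; exact hcross _ _
        _ ≤ ν * (c * √(V s) * (β * exp (-μ * s))) := by
            gcongr; exacts [(hWc_equiv _).1, hxhat s hs]
        _ = ν * c * β * exp (-μ * s) * √(V s) := by ring
    rw [mulVec_add, dotProduct_add]
    linarith [hcontr (xstar s) (x s)]
  have hV := sqrt_le_mul_exp_of_hasDerivAt_le_add_sqrt (fun s => by
      simpa using hWc.inv.posSemidef.dotProduct_mulVec_nonneg (e s)) hμ (by positivity)
    (fun s hs => (he s hs).dotProduct_mulVec_self hWc.inv.posSemidef.isSymm) hV' ht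
  calc √(e t ⬝ᵥ e t) ≤ c * √(V t) := (hWc_equiv _).1
    _ ≤ c * ((1 + t) * exp (-μ * t) * (c * √(e 0 ⬝ᵥ e 0) + ν * c * β)) := by
        gcongr; exact hV.trans (by gcongr; exact (hWc_equiv _).2)
    _ ≤ c ^ 2 * (1 + ν) * (1 + t) * exp (-μ * t) * (√(e 0 ⬝ᵥ e 0) + β) := by
        have hgap : c ^ 2 * (1 + ν) * (1 + t) * exp (-μ * t) * (√(e 0 ⬝ᵥ e 0) + β) -
            c * ((1 + t) * exp (-μ * t) * (c * √(e 0 ⬝ᵥ e 0) + ν * c * β)) =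
            c ^ 2 * (1 + t) * exp (-μ * t) * (β + ν * √(e 0 ⬝ᵥ e 0)) := by ring
        have : 0 ≤ c ^ 2 * (1 + t) * exp (-μ * t) * (β + ν * √(e 0 ⬝ᵥ e 0)) := by positivity
        linarith

end ErrorDynamics

theorem separation_principle_constant_metric_general {n m p : ℕ}
    (f : (Fin n → ℝ) → (Fin n → ℝ))
    (A : (Fin n → ℝ) → Matrix (Fin n) (Fin n) ℝ)
    (hf : ∀ x : Fin n → ℝ,
      HasFDerivAt f ((Matrix.toLin' (A x)).toContinuousLinearMap) x)
    (B : Matrix (Fin n) (Fin m) ℝ) (C : Matrix (Fin p) (Fin n) ℝ)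
    (Wc Wo : Matrix (Fin n) (Fin n) ℝ) (hWc : Wc.PosDef) (hWo : Wo.PosDef)
    (lamc lamo ρc ρo : ℝ)
    (hLMIc : ∀ x : Fin n → ℝ,
      ((-(2 * lamc)) • Wc - (Wc * (A x)ᵀ + A x * Wc - ρc • (B * Bᵀ))).PosSemidef)
    (hLMIo : ∀ x : Fin n → ℝ,
      ((-(2 * lamo)) • Wo - ((A x)ᵀ * Wo + Wo * A x - ρo • (Cᵀ * C))).PosSemidef)
    (K : Matrix (Fin m) (Fin n) ℝ) (hK : K = (-(ρc / 2)) • (Bᵀ * Wc⁻¹))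
    (L : Matrix (Fin n) (Fin p) ℝ) (hL : L = (ρo / 2) • (Wo⁻¹ * Cᵀ)) :
    ∃ c : ℝ, 0 < c ∧
      ∀ ustar : ℝ → (Fin m → ℝ), Continuous ustar →
      ∀ xstar x xhat : ℝ → (Fin n → ℝ),
        (∀ t : ℝ, 0 ≤ t →
          HasDerivAt xstar (f (xstar t) + B.mulVec (ustar t)) t) →
        (∀ t : ℝ, 0 ≤ t →
          HasDerivAt x
            (f (x t) + B.mulVec (ustar t + K.mulVec (xhat t - xstar t))) t) →
        (∀ t : ℝ, 0 ≤ t →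
          HasDerivAt xhat
            (f (xhat t) + B.mulVec (ustar t + K.mulVec (xhat t - xstar t)) +
              L.mulVec (C.mulVec (x t) - C.mulVec (xhat t))) t) →
        ∀ t : ℝ, 0 ≤ t →
          Real.sqrt ((x t - xstar t) ⬝ᵥ (x t - xstar t)) +
              Real.sqrt ((xhat t - x t) ⬝ᵥ (xhat t - x t)) ≤
            c * (1 + t) * Real.exp (-(min lamc lamo) * t) *
              (Real.sqrt ((x 0 - xstar 0) ⬝ᵥ (x 0 - xstar 0)) +
                Real.sqrt ((xhat 0 - x 0) ⬝ᵥ (xhat 0 - x 0))) := by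
  obtain ⟨co, hco, hobserver⟩ := observer_error_le hf hWo hLMIo hL
  obtain ⟨cc, hcc, htracking⟩ := tracking_error_le hf hWc hLMIc hK
  refine ⟨cc * (1 + co) + co, by positivity, fun ustar _ xstar x xhat hxstar hx hxhat t ht => ?_⟩
  set μ := min lamc lamo
  set a₀ := √((x 0 - xstar 0) ⬝ᵥ (x 0 - xstar 0))
  set b₀ := √((xhat 0 - x 0) ⬝ᵥ (xhat 0 - x 0))
  have hε : ∀ s, 0 ≤ s → √((xhat s - x s) ⬝ᵥ (xhat s - x s)) ≤ co * b₀ * exp (-μ * s) :=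
    fun s hs => (hobserver _ x xhat hx hxhat s hs).trans (by gcongr; exact min_le_right _ _)
  have he := htracking ustar xstar x xhat (co * b₀) μ (by positivity) (min_le_left _ _)
    hxstar hx hε t ht
  have hgap : (cc * (1 + co) + co) * (1 + t) * exp (-μ * t) * (a₀ + b₀) -
      (cc * (1 + t) * exp (-μ * t) * (a₀ + co * b₀) + co * b₀ * exp (-μ * t)) =
      exp (-μ * t) * (cc * (1 + t) * (b₀ + co * a₀) + co * ((1 + t) * a₀ + t * b₀)) := by ring
  have : 0 ≤ exp (-μ * t) * (cc * (1 + t) * (b₀ + co * a₀) + co * ((1 + t) * a₀ + t * b₀)) := by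
    positivity
  linarith [hε t ht]

/-- Separation principle with constant metrics: the certainty-equivalence combination of
the contraction-metric state-feedback controller `K = -(ρ_c/2)BᵀW_c⁻¹` and the
contraction-metric observer with gain `L = (ρ_o/2)W_o⁻¹Cᵀ` exponentially stabilizes every
feasible target trajectory by output feedback, with rate `min(λ_c, λ_o)` up to a factor
`c(1+t)`. -/
theorem separation_principle_constant_metric {n m p : ℕ}
    (f : (Fin n → ℝ) → (Fin n → ℝ))
    (A : (Fin n → ℝ) → Matrix (Fin n) (Fin n) ℝ)
    (hf : ∀ x : Fin n → ℝ,
      HasFDerivAt f ((Matrix.toLin' (A x)).toContinuousLinearMap) x)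
    (hA : Continuous A)
    (B : Matrix (Fin n) (Fin m) ℝ) (C : Matrix (Fin p) (Fin n) ℝ)
    (Wc Wo : Matrix (Fin n) (Fin n) ℝ) (hWc : Wc.PosDef) (hWo : Wo.PosDef)
    (lamc lamo ρc ρo : ℝ)
    (hlamc : 0 < lamc) (hlamo : 0 < lamo) (hρc : 0 ≤ ρc) (hρo : 0 ≤ ρo)
    (hLMIc : ∀ x : Fin n → ℝ,
      ((-(2 * lamc)) • Wc - (Wc * (A x)ᵀ + A x * Wc - ρc • (B * Bᵀ))).PosSemidef)
    (hLMIo : ∀ x : Fin n → ℝ,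
      ((-(2 * lamo)) • Wo - ((A x)ᵀ * Wo + Wo * A x - ρo • (Cᵀ * C))).PosSemidef)
    (K : Matrix (Fin m) (Fin n) ℝ) (hK : K = (-(ρc / 2)) • (Bᵀ * Wc⁻¹))
    (L : Matrix (Fin n) (Fin p) ℝ) (hL : L = (ρo / 2) • (Wo⁻¹ * Cᵀ)) :
    ∃ c : ℝ, 0 < c ∧
      ∀ ustar : ℝ → (Fin m → ℝ), Continuous ustar →
      ∀ xstar x xhat : ℝ → (Fin n → ℝ),
        (∀ t : ℝ, 0 ≤ t →
          HasDerivAt xstar (f (xstar t) + B.mulVec (ustar t)) t) →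
        (∀ t : ℝ, 0 ≤ t →
          HasDerivAt x
            (f (x t) + B.mulVec (ustar t + K.mulVec (xhat t - xstar t))) t) →
        (∀ t : ℝ, 0 ≤ t →
          HasDerivAt xhat
            (f (xhat t) + B.mulVec (ustar t + K.mulVec (xhat t - xstar t)) +
              L.mulVec (C.mulVec (x t) - C.mulVec (xhat t))) t) →
        ∀ t : ℝ, 0 ≤ t →
          Real.sqrt ((x t - xstar t) ⬝ᵥ (x t - xstar t)) +
              Real.sqrt ((xhat t - x t) ⬝ᵥ (xhat t - x t)) ≤
            c * (1 + t) * Real.exp (-(min lamc lamo) * t) *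
              (Real.sqrt ((x 0 - xstar 0) ⬝ᵥ (x 0 - xstar 0)) +
                Real.sqrt ((xhat 0 - x 0) ⬝ᵥ (xhat 0 - x 0))) :=
  separation_principle_constant_metric_general f A hf B C Wc Wo hWc hWo lamc lamo ρc ρo hLMIc hLMIo
    K hK L hL
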